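/- Let r₁ = 3ℓ⁽¹⁾w⁽⁰⁾ − 2ℓ⁽⁰⁾w⁽¹⁾ ∈ P. Then r₁³ lies in the ideal I generated by {f⁽ⁱ⁾ : i ≥ 0}, where f⁽ⁱ⁾ = Dⁱ((w⁽⁰⁾)² − (ℓ⁽⁰⁾)³). -/
import Mathlib


open MvPolynomial

noncomputable section

/-- The polynomial ring `P = ℂ[ℓ⁽⁰⁾, ℓ⁽¹⁾, …, w⁽⁰⁾, w⁽¹⁾, …]`:
variables are indexed by `Fin 2 × ℕ`, where `(0, i)` is `ℓ⁽ⁱ⁾` and `(1, i)` is `w⁽ⁱ⁾`. -/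
abbrev P : Type := MvPolynomial (Fin 2 × ℕ) ℂ

/-- The unique ℂ-linear derivation `D : P → P` with `D(ℓ⁽ⁱ⁾) = ℓ⁽ⁱ⁺¹⁾`, `D(w⁽ⁱ⁾) = w⁽ⁱ⁺¹⁾`. -/
def D : Derivation ℂ P P :=
  MvPolynomial.mkDerivation ℂ (fun p : Fin 2 × ℕ => (X (p.1, p.2 + 1) : P))

/-- `ℓ⁽ⁱ⁾` -/
def lv (i : ℕ) : P := X (0, i)

/-- `w⁽ⁱ⁾` -/
def wv (i : ℕ) : P := X (1, i)

/-- `f = (w⁽⁰⁾)² − (ℓ⁽⁰⁾)³`. -/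
def f : P := wv 0 ^ 2 - lv 0 ^ 3

/-- `f⁽ⁱ⁾ = Dⁱ(f)`. -/
def fd (i : ℕ) : P := (⇑D)^[i] f

/-- The ideal `I` generated by all `f⁽ⁱ⁾`, `i ≥ 0`. -/
def I : Ideal P := Ideal.span (Set.range fd)

/-- `r₁ = 3ℓ⁽¹⁾w⁽⁰⁾ − 2ℓ⁽⁰⁾w⁽¹⁾`. -/
def r₁ : P := 3 * lv 1 * wv 0 - 2 * lv 0 * wv 1

theorem r₁_cubed_mem : r₁ ^ 3 ∈ I := by
  have hX : ∀ p : Fin 2 × ℕ, D (X p) = X (p.1, p.2 + 1) := fun p =>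
    MvPolynomial.mkDerivation_X _ _ _
  have hDf : D f = 2 * wv 0 * wv 1 - 3 * lv 0 ^ 2 * lv 1 := by
    simp only [f, lv, wv, map_sub, Derivation.leibniz_pow, hX, nsmul_eq_mul, smul_eq_mul]
    ring
  have hfd1 : fd 1 = 2 * wv 0 * wv 1 - 3 * lv 0 ^ 2 * lv 1 := by
    simpa [fd] using hDf
  have hfd0 : fd 0 = f := rfl
  have h0 : fd 0 ∈ I := Ideal.subset_span ⟨0, rfl⟩
  have h1 : fd 1 ∈ I := Ideal.subset_span ⟨1, rfl⟩
  have key : r₁ ^ 3 =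
      (8 * wv 1 ^ 3 + 27 * lv 1 ^ 3 * wv 0 - 36 * lv 0 * lv 1 ^ 2 * wv 1) * fd 0 +
      (-(4 * wv 0 * wv 1 ^ 2) - 9 * lv 0 * lv 1 ^ 2 * wv 0 + 12 * lv 0 ^ 2 * lv 1 * wv 1) * fd 1 := by
    rw [hfd0, hfd1, r₁, f]
    ring
  rw [key]
  exact add_mem (I.mul_mem_left _ h0) (I.mul_mem_left _ h1)
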